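/- arXiv:1111.3857 — 3 statements merged into one kernel-verified Lean document; each statement's English description precedes it below -/
import Mathlib

section
/- For every w ∈ ℝ² \ {0} with ‖w‖ ≠ 1, Λ₂(w) = (‖w‖²/(1+‖w‖²)) ∫₀¹ u^{−1/2} (1−u)^{−1/2} (1−βu)^{−1/2} du, where β = 4‖w‖²/(1+‖w‖²)² and Λ₂(w) = ‖w‖² (2‖w‖)^{−1} ∫_{P(w)} ‖w−y‖^{−1} ‖y‖^{−1} dμ¹(y) with P(w) = {y ∈ ℝ² : 2⟪w,y⟫ = 1+‖w‖²}. -/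
open MeasureTheory Real Set

open scoped RealInnerProductSpace EuclideanSpace

/-!
In the plane, the line `P(w) = {y | ⟪w, y⟫ = s}` is the image of an arc-length isometry
`t ↦ (s / ‖w‖²) • w + t • e` with `e ⊥ w` a unit vector, and `μH[1]` on it is the push-forward of
Lebesgue measure. Along it `‖y‖² = c² + t²` and `‖w - y‖² = a² + t²`, where for
`s = (1 + ‖w‖²) / 2` one has `c = (1 + ‖w‖²) / (2‖w‖)` and `a = (‖w‖² - 1) / (2‖w‖)`.
The integrand is even in `t`, and on `t > 0` the substitution `t = c √(1/u - 1)` gives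
`∫ dt / √((a² + t²)(c² + t²)) = (2c)⁻¹ ∫₀¹ du / √(u (1 - u) (1 - βu))` with
`β = 1 - a²/c² = 4‖w‖² / (1 + ‖w‖²)²`.
-/

theorem isometry_add_smul {E : Type*} [NormedAddCommGroup E] [NormedSpace ℝ E]
    (p : E) {e : E} (he : ‖e‖ = 1) : Isometry fun t : ℝ => p + t • e :=
  Isometry.of_dist_eq fun s t => by
    rw [dist_add_left, dist_eq_norm, ← sub_smul, norm_smul, he, mul_one, Real.dist_eq,
      Real.norm_eq_abs]

theorem Isometry.setIntegral_range_hausdorffMeasure_one {E F : Type*} [MetricSpace E]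
    [MeasurableSpace E] [BorelSpace E] [NormedAddCommGroup F] [NormedSpace ℝ F]
    {f : ℝ → E} (hf : Isometry f) (g : E → F) :
    ∫ y in range f, g y ∂μH[1] = ∫ t, g (f t) := by
  rw [← hf.map_hausdorffMeasure (Or.inl zero_le_one),
    hf.isClosedEmbedding.measurableEmbedding.integral_map, hausdorffMeasure_real]

theorem norm_add_smul_of_inner_eq_zero {E : Type*} [NormedAddCommGroup E]
    [InnerProductSpace ℝ E] {u e : E} (hue : ⟪u, e⟫ = 0) (he : ‖e‖ = 1) (t : ℝ) :
    ‖u + t • e‖ = √(‖u‖ ^ 2 + t ^ 2) := by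
  rw [← sqrt_sq (norm_nonneg (u + t • e)), sq,
    norm_add_sq_eq_norm_sq_add_norm_sq_real (by rw [inner_smul_right, hue, mul_zero]),
    norm_smul, he, mul_one, Real.norm_eq_abs, ← sq, ← sq, sq_abs]

namespace Orientation

variable {E : Type*} [NormedAddCommGroup E] [InnerProductSpace ℝ E] [Fact (Module.finrank ℝ E = 2)]
  (o : Orientation ℝ E (Fin 2))

local notation "ω" => o.areaForm
local notation "J" => o.rightAngleRotation

theorem inner_smul_add_areaForm_smul_rightAngleRotation (a x : E) :
    ⟪a, x⟫ • a + ω a x • J a = ‖a‖ ^ 2 • x := by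
  refine ext_inner_right ℝ fun v => ?_
  simpa [inner_add_left, inner_smul_left, o.inner_rightAngleRotation_left] using
    o.inner_mul_inner_add_areaForm_mul_areaForm a x v

theorem setOf_inner_eq_eq_range {w : E} (hw : w ≠ 0) (s : ℝ) :
    {y | ⟪w, y⟫ = s} = range fun t : ℝ => (s / ‖w‖ ^ 2) • w + t • (‖w‖⁻¹ • J w) := by
  have hr : ‖w‖ ≠ 0 := norm_ne_zero_iff.mpr hw
  ext y
  constructor
  · rintro rfl
    refine ⟨ω w y / ‖w‖, ?_⟩
    calc (⟪w, y⟫ / ‖w‖ ^ 2) • w + (ω w y / ‖w‖) • (‖w‖⁻¹ • J w)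
        = (‖w‖ ^ 2)⁻¹ • (⟪w, y⟫ • w + ω w y • J w) := by
          simp only [smul_add, smul_smul]; congr 2 <;> field_simp
      _ = y := by
          rw [o.inner_smul_add_areaForm_smul_rightAngleRotation, inv_smul_smul₀ (by positivity)]
  · rintro ⟨t, rfl⟩
    simp [inner_add_right, inner_smul_right, hr]

end Orientation

theorem setIntegral_setOf_inner_eq_hausdorffMeasure_one {E F : Type*} [NormedAddCommGroup E]
    [InnerProductSpace ℝ E] [Fact (Module.finrank ℝ E = 2)] [MeasurableSpace E] [BorelSpace E]
    [NormedAddCommGroup F] [NormedSpace ℝ F] {w : E} (hw : w ≠ 0) (s : ℝ) (g : ℝ → ℝ → F) :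
    ∫ y in {y | ⟪w, y⟫ = s}, g ‖w - y‖ ‖y‖ ∂μH[1] =
      ∫ t, g √((‖w‖ - s / ‖w‖) ^ 2 + t ^ 2) √((s / ‖w‖) ^ 2 + t ^ 2) := by
  have : FiniteDimensional ℝ E := .of_fact_finrank_eq_two
  let o : Orientation ℝ E (Fin 2) := (Module.finBasisOfFinrankEq ℝ E Fact.out).orientation
  have hr : 0 < ‖w‖ := norm_pos_iff.mpr hw
  set e := ‖w‖⁻¹ • o.rightAngleRotation w
  have he : ‖e‖ = 1 := by
    rw [norm_smul, LinearIsometryEquiv.norm_map, norm_inv, norm_norm, inv_mul_cancel₀ hr.ne']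
  have hwe : ⟪w, e⟫ = 0 := by
    rw [inner_smul_right, real_inner_comm, o.inner_rightAngleRotation_self, mul_zero]
  rw [o.setOf_inner_eq_eq_range hw, (isometry_add_smul _ he).setIntegral_range_hausdorffMeasure_one]
  congr 1 with t
  have hsub : w - ((s / ‖w‖ ^ 2) • w + t • e) = (1 - s / ‖w‖ ^ 2) • w + (-t) • e := by
    module
  rw [hsub, norm_add_smul_of_inner_eq_zero (by rw [inner_smul_left, hwe, mul_zero]) he,
    norm_add_smul_of_inner_eq_zero (by rw [inner_smul_left, hwe, mul_zero]) he,
    norm_smul, norm_smul, mul_pow, mul_pow, Real.norm_eq_abs, Real.norm_eq_abs, sq_abs, sq_abs,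
    neg_sq]
  congr 3 <;> field_simp

theorem inv_sqrt_eq_rpow_neg_half {x : ℝ} (hx : 0 ≤ x) : (√x)⁻¹ = x ^ (-(1 / 2) : ℝ) := by
  rw [rpow_neg hx, sqrt_eq_rpow]

theorem hasDerivAt_sqrt_inv_sub_one {u : ℝ} (hu : u ∈ Ioo (0 : ℝ) 1) :
    HasDerivAt (fun v => √(v⁻¹ - 1)) (-(2 * u * √u * √(1 - u))⁻¹) u := by
  obtain ⟨hu0, hu1⟩ := hu
  have hpos : 0 < u⁻¹ - 1 := by rw [sub_pos, one_lt_inv₀ hu0]; exact hu1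
  convert ((hasDerivAt_inv hu0.ne').sub_const 1).sqrt hpos.ne' using 1
  have hsq : √(u⁻¹ - 1) = √(1 - u) / √u := by
    rw [← sqrt_div (by linarith), sub_div, div_self hu0.ne', one_div]
  rw [hsq]
  field_simp
  rw [sq_sqrt hu0.le]

theorem strictAntiOn_sqrt_inv_sub_one : StrictAntiOn (fun v : ℝ => √(v⁻¹ - 1)) (Ioo 0 1) :=
  fun u ⟨hu0, _⟩ v ⟨_, hv1⟩ huv => sqrt_lt_sqrt
    (by rw [sub_nonneg, one_le_inv₀ (hu0.trans huv)]; exact hv1.le)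
    (by gcongr)

theorem image_sqrt_inv_sub_one_Ioo : (fun v : ℝ => √(v⁻¹ - 1)) '' Ioo 0 1 = Ioi 0 := by
  ext s
  constructor
  · rintro ⟨u, ⟨hu0, hu1⟩, rfl⟩
    exact sqrt_pos.mpr (by rw [sub_pos, one_lt_inv₀ hu0]; exact hu1)
  · intro (hs : 0 < s)
    refine ⟨(1 + s ^ 2)⁻¹, ⟨by positivity, inv_lt_one_of_one_lt₀ (by nlinarith)⟩, ?_⟩
    simp [sqrt_sq hs.le]

theorem integral_Ioi_inv_sqrt_mul_inv_sqrt {c : ℝ} (hc : 0 < c) (a : ℝ) :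
    ∫ t in Ioi 0, (√(a ^ 2 + t ^ 2))⁻¹ * (√(c ^ 2 + t ^ 2))⁻¹ =
      (2 * c)⁻¹ * ∫ u in Ioo 0 1, u ^ (-(1 / 2) : ℝ) * (1 - u) ^ (-(1 / 2) : ℝ) *
        (1 - (1 - a ^ 2 / c ^ 2) * u) ^ (-(1 / 2) : ℝ) := by
  have himage : (fun v => c * √(v⁻¹ - 1)) '' Ioo 0 1 = Ioi 0 := by
    change ((c * ·) ∘ fun v => √(v⁻¹ - 1)) '' Ioo 0 1 = Ioi 0
    rw [image_comp, image_sqrt_inv_sub_one_Ioo,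
      image_mul_left_Ioi hc, mul_zero]
  rw [← himage, integral_image_eq_integral_abs_deriv_smul measurableSet_Ioo
      (fun u hu => ((hasDerivAt_sqrt_inv_sub_one hu).const_mul c).hasDerivWithinAt)
      (fun u hu v hv h => strictAntiOn_sqrt_inv_sub_one.injOn hu hv (mul_left_cancel₀ hc.ne' h)),
    ← integral_const_mul]
  refine setIntegral_congr_fun measurableSet_Ioo fun u ⟨hu0, hu1⟩ => ?_
  have hβ : 0 < 1 - (1 - a ^ 2 / c ^ 2) * u := by
    have : 0 ≤ a ^ 2 / c ^ 2 * u := by positivity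
    nlinarith
  have hsq : √(u⁻¹ - 1) ^ 2 = u⁻¹ - 1 := sq_sqrt (by rw [sub_nonneg, one_le_inv₀ hu0]; exact hu1.le)
  have ha : √(a ^ 2 + (c * √(u⁻¹ - 1)) ^ 2) = c * √(1 - (1 - a ^ 2 / c ^ 2) * u) / √u := by
    rw [← sqrt_sq (by positivity : 0 ≤ c * √(1 - (1 - a ^ 2 / c ^ 2) * u) / √u)]
    congr 1
    rw [div_pow, mul_pow, mul_pow, hsq, sq_sqrt hβ.le, sq_sqrt hu0.le]
    field_simp
    ring
  have hc' : √(c ^ 2 + (c * √(u⁻¹ - 1)) ^ 2) = c / √u := by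
    rw [← sqrt_sq (by positivity : 0 ≤ c / √u)]
    congr 1
    rw [div_pow, mul_pow, hsq, sq_sqrt hu0.le]
    field_simp
    ring
  rw [← inv_sqrt_eq_rpow_neg_half hu0.le, ← inv_sqrt_eq_rpow_neg_half (by linarith),
    ← inv_sqrt_eq_rpow_neg_half hβ.le, ha, hc', smul_eq_mul, abs_mul, abs_neg, abs_of_pos hc,
    abs_inv, abs_of_pos (by positivity)]
  field_simp
  rw [sq_sqrt hu0.le]

theorem integral_inv_sqrt_mul_inv_sqrt {c : ℝ} (hc : 0 < c) (a : ℝ) :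
    ∫ t, (√(a ^ 2 + t ^ 2))⁻¹ * (√(c ^ 2 + t ^ 2))⁻¹ =
      c⁻¹ * ∫ u in Ioo 0 1, u ^ (-(1 / 2) : ℝ) * (1 - u) ^ (-(1 / 2) : ℝ) *
        (1 - (1 - a ^ 2 / c ^ 2) * u) ^ (-(1 / 2) : ℝ) := by
  calc ∫ t, (√(a ^ 2 + t ^ 2))⁻¹ * (√(c ^ 2 + t ^ 2))⁻¹
      = ∫ t, (√(a ^ 2 + |t| ^ 2))⁻¹ * (√(c ^ 2 + |t| ^ 2))⁻¹ := by simp_rw [sq_abs]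
    _ = _ := by
      rw [integral_comp_abs (f := fun t => (√(a ^ 2 + t ^ 2))⁻¹ * (√(c ^ 2 + t ^ 2))⁻¹),
        integral_Ioi_inv_sqrt_mul_inv_sqrt hc, ← mul_assoc, mul_inv, ← mul_assoc,
        mul_inv_cancel₀ two_ne_zero, one_mul]

theorem Lambda_two_elliptic_integral_general (w : EuclideanSpace ℝ (Fin 2))
    (hw : w ≠ 0) :
    ‖w‖ ^ 2 * (2 * ‖w‖)⁻¹ *
        ∫ y in {y : EuclideanSpace ℝ (Fin 2) |
            2 * (inner ℝ w y : ℝ) = 1 + ‖w‖ ^ 2},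
          ‖w - y‖⁻¹ * ‖y‖⁻¹ ∂μH[(1 : ℝ)] =
      (‖w‖ ^ 2 / (1 + ‖w‖ ^ 2)) *
        ∫ u in Set.Ioo (0 : ℝ) 1,
          u ^ (-(1 / 2) : ℝ) * (1 - u) ^ (-(1 / 2) : ℝ) *
            (1 - (4 * ‖w‖ ^ 2 / (1 + ‖w‖ ^ 2) ^ 2) * u) ^ (-(1 / 2) : ℝ) := by
  have hline : {y : EuclideanSpace ℝ (Fin 2) | 2 * ⟪w, y⟫ = 1 + ‖w‖ ^ 2} =
      {y | ⟪w, y⟫ = (1 + ‖w‖ ^ 2) / 2} := by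
    ext y
    change _ = _ ↔ _ = _
    constructor <;> intro h <;> linarith
  have hβ : 1 - (‖w‖ - (1 + ‖w‖ ^ 2) / 2 / ‖w‖) ^ 2 / ((1 + ‖w‖ ^ 2) / 2 / ‖w‖) ^ 2 =
      4 * ‖w‖ ^ 2 / (1 + ‖w‖ ^ 2) ^ 2 := by
    field_simp
    ring
  rw [hline, setIntegral_setOf_inner_eq_hausdorffMeasure_one hw _
      (fun x y => x⁻¹ * y⁻¹), integral_inv_sqrt_mul_inv_sqrt (by positivity), hβ, ← mul_assoc]
  congr 1
  field_simp

/-- In dimension two, away from the unit sphere, `Λ₂(w)` is computed by an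
elliptic-type integral: `Λ₂(w) = (‖w‖²/(1+‖w‖²)) ∫₀¹ u^{-1/2}(1-u)^{-1/2}(1-βu)^{-1/2} du`
with `β = 4‖w‖²/(1+‖w‖²)²`. -/
theorem Lambda_two_elliptic_integral (w : EuclideanSpace ℝ (Fin 2))
    (hw : w ≠ 0) (hw1 : ‖w‖ ≠ 1) :
    ‖w‖ ^ 2 * (2 * ‖w‖)⁻¹ *
        ∫ y in {y : EuclideanSpace ℝ (Fin 2) |
            2 * (inner ℝ w y : ℝ) = 1 + ‖w‖ ^ 2},
          ‖w - y‖⁻¹ * ‖y‖⁻¹ ∂μH[(1 : ℝ)] =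
      (‖w‖ ^ 2 / (1 + ‖w‖ ^ 2)) *
        ∫ u in Set.Ioo (0 : ℝ) 1,
          u ^ (-(1 / 2) : ℝ) * (1 - u) ^ (-(1 / 2) : ℝ) *
            (1 - (4 * ‖w‖ ^ 2 / (1 + ‖w‖ ^ 2) ^ 2) * u) ^ (-(1 / 2) : ℝ) :=
  Lambda_two_elliptic_integral_general w hw
end

section
/- For every w ∈ ℝ² with ‖w‖ = 1, the integral ∫_{P(w)} ‖w−y‖^{−1} ‖y‖^{−1} dμ¹(y) diverges (equals +∞), where P(w) = {y ∈ ℝ² : 2⟪w,y⟫ = 1+‖w‖²}. Consequently Λ₂(w) = ‖w‖²(2‖w‖)^{−1} ∫_{P(w)} ‖w−y‖^{−1}‖y‖^{−1} dμ¹(y) is not uniformly bounded on ℝ² \ {0}. -/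
/-!
For `‖w‖ = 1` the line `P(w) = {y | ⟪w, y⟫ = 1}` is the tangent line to the unit sphere at `w`,
so it passes through the singularity `y = w` of the integrand. Parametrising it by arclength as
`t ↦ w + t • v` with `v` a unit vector orthogonal to `w` (an isometry, so it carries Lebesgue
measure to `μH[1]` on the line), the integrand is `t⁻¹ ‖w + t • v‖⁻¹ ≥ (2t)⁻¹` for `0 < t < 1`,
and `∫₀¹ dt / t = ∞`. Hence `Λ₂(w) = ∞` on the whole unit sphere.
-/

open MeasureTheory Real ENNReal

/-- `Λ₂(w)` as an `ℝ≥0∞`-valued integral (the rigorous resolution of the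
distributional integral, with the delta resolved as a line integral). -/
noncomputable def LambdaTwo (w : EuclideanSpace ℝ (Fin 2)) : ℝ≥0∞ :=
  ENNReal.ofReal (‖w‖ ^ 2 * (2 * ‖w‖)⁻¹) *
    ∫⁻ y in {y : EuclideanSpace ℝ (Fin 2) |
        2 * (inner ℝ w y : ℝ) = 1 + ‖w‖ ^ 2},
      ENNReal.ofReal (‖w - y‖⁻¹ * ‖y‖⁻¹) ∂μH[(1 : ℝ)]

open Set Module

theorem lintegral_ofReal_inv_Ioo_zero_one : ∫⁻ t in Ioo (0 : ℝ) 1, ENNReal.ofReal t⁻¹ = ⊤ := by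
  have hint : ¬ IntegrableOn (fun t : ℝ ↦ t⁻¹) (Ioo 0 1) := by
    rw [← intervalIntegrable_iff_integrableOn_Ioo_of_le zero_le_one]
    simp
  contrapose! hint
  refine (lintegral_ofReal_ne_top_iff_integrable measurable_inv.aestronglyMeasurable ?_).1 hint
  filter_upwards [ae_restrict_mem measurableSet_Ioo] with t ht
  exact inv_nonneg.2 ht.1.le

theorem Isometry.setLIntegral_range_hausdorffMeasure {X Y : Type*}
    [EMetricSpace X] [CompleteSpace X] [MeasurableSpace X] [BorelSpace X]
    [EMetricSpace Y] [MeasurableSpace Y] [BorelSpace Y]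
    {f : X → Y} (hf : Isometry f) {d : ℝ} (hd : 0 ≤ d) (g : Y → ℝ≥0∞) :
    ∫⁻ y in range f, g y ∂μH[d] = ∫⁻ x, g (f x) ∂μH[d] := by
  rw [← hf.map_hausdorffMeasure (Or.inl hd),
    hf.isClosedEmbedding.measurableEmbedding.lintegral_map]

theorem isometry_add_smul_s3 {E : Type*} [SeminormedAddCommGroup E] [NormedSpace ℝ E]
    (w : E) {v : E} (hv : ‖v‖ = 1) : Isometry fun t : ℝ ↦ w + t • v :=
  Isometry.of_dist_eq fun s t ↦ by
    rw [dist_add_left, dist_eq_norm, dist_eq_norm, ← sub_smul, norm_smul, hv, mul_one]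

theorem exists_norm_eq_one_inner_eq_zero {E : Type*} [NormedAddCommGroup E]
    [InnerProductSpace ℝ E] (hE : 2 ≤ finrank ℝ E) (w : E) :
    ∃ v : E, ‖v‖ = 1 ∧ inner ℝ w v = 0 := by
  have : FiniteDimensional ℝ E := Module.finite_of_finrank_pos (by omega)
  let K : Submodule ℝ E := ℝ ∙ w
  have : Nontrivial Kᗮ := by
    apply nontrivial_of_finrank_pos (R := ℝ)
    have := K.finrank_add_finrank_orthogonal
    have : finrank ℝ K ≤ 1 := (finrank_span_le_card {w}).trans (by simp)
    omega
  obtain ⟨⟨u, hu⟩, hu0⟩ := exists_ne (0 : Kᗮ)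
  have hu0 : u ≠ 0 := by simpa using hu0
  refine ⟨‖u‖⁻¹ • u, norm_smul_inv_norm hu0, ?_⟩
  rw [inner_smul_right, Submodule.mem_orthogonal_singleton_iff_inner_right.1 hu, mul_zero]

theorem lintegral_ofReal_inv_dist_mul_inv_norm_add_smul_eq_top {E : Type*}
    [SeminormedAddCommGroup E] [NormedSpace ℝ E] {w v : E} (hw : ‖w‖ = 1) (hv : ‖v‖ = 1) :
    ∫⁻ t : ℝ, ENNReal.ofReal (‖w - (w + t • v)‖⁻¹ * ‖w + t • v‖⁻¹) = ⊤ := by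
  have hlower : ∀ t ∈ Ioo (0 : ℝ) 1, ENNReal.ofReal t⁻¹ * ENNReal.ofReal 2⁻¹ ≤
      ENNReal.ofReal (‖w - (w + t • v)‖⁻¹ * ‖w + t • v‖⁻¹) := fun t ⟨ht0, ht1⟩ ↦ by
    have hdist : ‖w - (w + t • v)‖ = t := by
      rw [sub_add_cancel_left, norm_neg, norm_smul, hv, mul_one, norm_of_nonneg ht0.le]
    have hnorm_le : ‖w + t • v‖ ≤ 2 := by
      have := norm_add_le w (t • v)
      rw [hw, norm_smul, hv, mul_one, norm_of_nonneg ht0.le] at this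
      linarith
    have hnorm_pos : 0 < ‖w + t • v‖ := by
      have := norm_sub_norm_le w (-(t • v))
      rw [sub_neg_eq_add, hw, norm_neg, norm_smul, hv, mul_one, norm_of_nonneg ht0.le] at this
      linarith
    rw [← ENNReal.ofReal_mul (inv_nonneg.2 ht0.le), hdist]
    gcongr
  refine top_le_iff.1 ?_
  calc ⊤ = (∫⁻ t in Ioo (0 : ℝ) 1, ENNReal.ofReal t⁻¹) * ENNReal.ofReal 2⁻¹ := by
        rw [lintegral_ofReal_inv_Ioo_zero_one, ENNReal.top_mul (by norm_num)]
    _ = ∫⁻ t in Ioo (0 : ℝ) 1, ENNReal.ofReal t⁻¹ * ENNReal.ofReal 2⁻¹ :=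
        (lintegral_mul_const _ measurable_inv.ennreal_ofReal).symm
    _ ≤ _ := setLIntegral_mono' measurableSet_Ioo hlower
    _ ≤ _ := setLIntegral_le_lintegral _ _

theorem lintegral_ofReal_inv_dist_mul_inv_norm_tangentLine_eq_top {E : Type*}
    [NormedAddCommGroup E] [InnerProductSpace ℝ E] [MeasurableSpace E] [BorelSpace E]
    (hE : 2 ≤ finrank ℝ E) {w : E} (hw : ‖w‖ = 1) :
    ∫⁻ y in {y : E | 2 * (inner ℝ w y : ℝ) = 1 + ‖w‖ ^ 2},
      ENNReal.ofReal (‖w - y‖⁻¹ * ‖y‖⁻¹) ∂μH[(1 : ℝ)] = ⊤ := by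
  obtain ⟨v, hv, hwv⟩ := exists_norm_eq_one_inner_eq_zero hE w
  have hline : range (fun t : ℝ ↦ w + t • v) ⊆ {y : E | 2 * (inner ℝ w y : ℝ) = 1 + ‖w‖ ^ 2} := by
    rintro _ ⟨t, rfl⟩
    simp only [mem_ofPred_eq, inner_add_right, real_inner_smul_right, hwv,
      real_inner_self_eq_norm_sq, hw]
    norm_num
  refine top_le_iff.1 ?_
  calc ⊤ = ∫⁻ t : ℝ, ENNReal.ofReal (‖w - (w + t • v)‖⁻¹ * ‖w + t • v‖⁻¹) :=
        (lintegral_ofReal_inv_dist_mul_inv_norm_add_smul_eq_top hw hv).symm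
    _ = ∫⁻ y in range (fun t : ℝ ↦ w + t • v), ENNReal.ofReal (‖w - y‖⁻¹ * ‖y‖⁻¹) ∂μH[1] := by
        rw [(isometry_add_smul_s3 w hv).setLIntegral_range_hausdorffMeasure zero_le_one,
          hausdorffMeasure_real]
    _ ≤ _ := lintegral_mono_set hline

theorem LambdaTwo_eq_top_of_norm_eq_one {w : EuclideanSpace ℝ (Fin 2)} (hw : ‖w‖ = 1) :
    LambdaTwo w = ⊤ := by
  rw [LambdaTwo, lintegral_ofReal_inv_dist_mul_inv_norm_tangentLine_eq_top (by simp) hw, hw,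
    ENNReal.mul_top (by norm_num)]

/-- For every `w ∈ ℝ²` with `‖w‖ = 1` the line integral
`∫_{P(w)} ‖w-y‖⁻¹ ‖y‖⁻¹ dμ¹(y)` diverges; consequently `Λ₂` is not uniformly
bounded on `ℝ² \ {0}`. -/
theorem Lambda_two_unbounded :
    (∀ w : EuclideanSpace ℝ (Fin 2), ‖w‖ = 1 →
      (∫⁻ y in {y : EuclideanSpace ℝ (Fin 2) |
          2 * (inner ℝ w y : ℝ) = 1 + ‖w‖ ^ 2},
        ENNReal.ofReal (‖w - y‖⁻¹ * ‖y‖⁻¹) ∂μH[(1 : ℝ)]) = ⊤) ∧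
    ¬ ∃ C : ℝ≥0∞, C ≠ ⊤ ∧
      ∀ w : EuclideanSpace ℝ (Fin 2), w ≠ 0 → LambdaTwo w ≤ C := by
  refine ⟨fun w hw ↦ lintegral_ofReal_inv_dist_mul_inv_norm_tangentLine_eq_top (by simp) hw, ?_⟩
  rintro ⟨C, hC, hbound⟩
  obtain ⟨w, hw⟩ := exists_norm_eq (EuclideanSpace ℝ (Fin 2)) zero_le_one
  have hw0 : w ≠ 0 := norm_ne_zero_iff.1 (hw ▸ one_ne_zero)
  exact hC (top_le_iff.1 (LambdaTwo_eq_top_of_norm_eq_one hw ▸ hbound w hw0))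
end

section
/- For every α with 1/2 < α < 1 there is a constant C > 0 such that Λ_{2,α}(w) ≤ C for all w ∈ ℝ² \ {0}, where Λ_{2,α}(w) = ‖w‖^{2α} (2‖w‖)^{−1} ∫_{P(w)} ‖w−y‖^{−α} ‖y‖^{−α} dμ¹(y) and P(w) = {y ∈ ℝ² : 2⟪w,y⟫ = 1+‖w‖²}. -/
/-!
The set `P(w)` is the line `⟪w, y⟫ = s` with `s = (1 + ‖w‖²) / 2`, at distance
`d = s / ‖w‖ ≥ ‖w‖ / 2` from the origin. Parametrised by arc length it turns the integral into
`∫ (e² + t²)^(-α/2) (d² + t²)^(-α/2) dt`, whose integrand is at most `d^(-α) |t|^(-α)` for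
`|t| ≤ d` and `|t|^(-2α)` for `|t| > d`. Because `1/2 < α < 1` both majorants are integrable,
and the integral is `O(d^(1-2α))`; the prefactor `‖w‖^(2α-1) / 2` then leaves
`(‖w‖ / d)^(2α-1) / 2 ≤ 1` times a constant.
-/

open MeasureTheory Real Set

noncomputable def lineKernel (α e d t : ℝ) : ℝ :=
  √(e ^ 2 + t ^ 2) ^ (-α) * √(d ^ 2 + t ^ 2) ^ (-α)

section LineKernel

variable {α e d t : ℝ}

lemma lineKernel_nonneg : 0 ≤ lineKernel α e d t := by
  unfold lineKernel; positivity

lemma measurable_lineKernel : Measurable (lineKernel α e d) := by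
  unfold lineKernel; fun_prop

lemma lineKernel_abs : lineKernel α e d |t| = lineKernel α e d t := by
  simp only [lineKernel, sq_abs]

lemma sqrt_sq_add_sq_rpow_neg_le (a : ℝ) (ht : 0 < t) (hα : 0 ≤ α) :
    √(a ^ 2 + t ^ 2) ^ (-α) ≤ t ^ (-α) :=
  rpow_le_rpow_of_nonpos ht ((le_sqrt' ht).2 (by nlinarith)) (by linarith)

lemma lineKernel_le_rpow_mul_rpow (hα : 0 ≤ α) (hd : 0 < d) (ht : 0 < t) :
    lineKernel α e d t ≤ t ^ (-α) * d ^ (-α) := by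
  have hd' := sqrt_sq_add_sq_rpow_neg_le t hd hα
  rw [add_comm] at hd'
  exact mul_le_mul (sqrt_sq_add_sq_rpow_neg_le e ht hα) hd' (by positivity) (by positivity)

lemma lineKernel_le_rpow (hα : 0 ≤ α) (ht : 0 < t) : lineKernel α e d t ≤ t ^ (-(2 * α)) := by
  calc lineKernel α e d t ≤ t ^ (-α) * t ^ (-α) :=
        mul_le_mul (sqrt_sq_add_sq_rpow_neg_le e ht hα) (sqrt_sq_add_sq_rpow_neg_le d ht hα)
          (by positivity) (by positivity)
    _ = t ^ (-(2 * α)) := by rw [← rpow_add ht]; ring_nf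

lemma integrableOn_lineKernel_of_le {s : Set ℝ} {g : ℝ → ℝ} (hs : MeasurableSet s)
    (hg : IntegrableOn g s) (hle : ∀ t ∈ s, lineKernel α e d t ≤ g t) :
    IntegrableOn (lineKernel α e d) s :=
  hg.mono' measurable_lineKernel.aestronglyMeasurable <| by
    filter_upwards [ae_restrict_mem hs] with t ht
    rw [norm_of_nonneg lineKernel_nonneg]
    exact hle t ht

lemma integrableOn_rpow_mul_rpow_Ioc (hα : α < 1) (hd : 0 < d) :
    IntegrableOn (fun t ↦ t ^ (-α) * d ^ (-α)) (Ioc 0 d) :=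
  Integrable.mul_const ((intervalIntegrable_iff_integrableOn_Ioc_of_le hd.le).1
    (intervalIntegral.intervalIntegrable_rpow' (by linarith))) _

lemma integrableOn_lineKernel_Ioc (hα₀ : 0 ≤ α) (hα₁ : α < 1) (hd : 0 < d) :
    IntegrableOn (lineKernel α e d) (Ioc 0 d) :=
  integrableOn_lineKernel_of_le measurableSet_Ioc (integrableOn_rpow_mul_rpow_Ioc hα₁ hd)
    fun _ ht ↦ lineKernel_le_rpow_mul_rpow hα₀ hd ht.1

lemma setIntegral_lineKernel_Ioc_le (hα₀ : 0 ≤ α) (hα₁ : α < 1) (hd : 0 < d) :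
    ∫ t in Ioc 0 d, lineKernel α e d t ≤ d ^ (1 - 2 * α) / (1 - α) := by
  calc ∫ t in Ioc 0 d, lineKernel α e d t ≤ ∫ t in Ioc 0 d, t ^ (-α) * d ^ (-α) :=
        setIntegral_mono_on (integrableOn_lineKernel_Ioc hα₀ hα₁ hd)
          (integrableOn_rpow_mul_rpow_Ioc hα₁ hd) measurableSet_Ioc
          fun _ ht ↦ lineKernel_le_rpow_mul_rpow hα₀ hd ht.1
    _ = d ^ (1 - 2 * α) / (1 - α) := by
      rw [integral_mul_const, ← intervalIntegral.integral_of_le hd.le,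
        integral_rpow (.inl (by linarith)), zero_rpow (by linarith), sub_zero, div_mul_eq_mul_div,
        ← rpow_add hd]
      ring_nf

lemma integrableOn_lineKernel_Ioi (hα : 1 / 2 < α) (hd : 0 < d) :
    IntegrableOn (lineKernel α e d) (Ioi d) :=
  integrableOn_lineKernel_of_le measurableSet_Ioi (integrableOn_Ioi_rpow_of_lt (by linarith) hd)
    fun _ ht ↦ lineKernel_le_rpow (by linarith) (hd.trans ht)

lemma setIntegral_lineKernel_Ioi_le (hα : 1 / 2 < α) (hd : 0 < d) :
    ∫ t in Ioi d, lineKernel α e d t ≤ d ^ (1 - 2 * α) / (2 * α - 1) := by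
  calc ∫ t in Ioi d, lineKernel α e d t ≤ ∫ t in Ioi d, t ^ (-(2 * α)) :=
        setIntegral_mono_on (integrableOn_lineKernel_Ioi hα hd)
          (integrableOn_Ioi_rpow_of_lt (by linarith) hd) measurableSet_Ioi
          fun _ ht ↦ lineKernel_le_rpow (by linarith) (hd.trans ht)
    _ = d ^ (1 - 2 * α) / (2 * α - 1) := by
      rw [integral_Ioi_rpow_of_lt (by linarith) hd, neg_div, ← div_neg]
      ring_nf

theorem integral_lineKernel_le (hα₁ : 1 / 2 < α) (hα₂ : α < 1) (hd : 0 < d) :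
    ∫ t, lineKernel α e d t ≤ d ^ (1 - 2 * α) * (2 / (1 - α) + 2 / (2 * α - 1)) := by
  have hα₀ : 0 ≤ α := by linarith
  have heven : ∫ t, lineKernel α e d t = 2 * ∫ t in Ioi 0, lineKernel α e d t := by
    simpa only [lineKernel_abs] using integral_comp_abs (f := lineKernel α e d)
  rw [heven, ← Ioc_union_Ioi_eq_Ioi hd.le,
    setIntegral_union (Ioc_disjoint_Ioi le_rfl) measurableSet_Ioi
      (integrableOn_lineKernel_Ioc hα₀ hα₂ hd) (integrableOn_lineKernel_Ioi hα₁ hd)]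
  calc _ ≤ 2 * (d ^ (1 - 2 * α) / (1 - α) + d ^ (1 - 2 * α) / (2 * α - 1)) := by
        gcongr
        exacts [setIntegral_lineKernel_Ioc_le hα₀ hα₂ hd, setIntegral_lineKernel_Ioi_le hα₁ hd]
    _ = _ := by ring

end LineKernel

theorem Isometry.setIntegral_range_hausdorffMeasure {X Y F : Type*} [EMetricSpace X]
    [CompleteSpace X] [MeasurableSpace X] [BorelSpace X] [EMetricSpace Y] [MeasurableSpace Y]
    [BorelSpace Y] [NormedAddCommGroup F] [NormedSpace ℝ F] {φ : X → Y} (hφ : Isometry φ)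
    {d : ℝ} (hd : 0 ≤ d) (f : Y → F) :
    ∫ y in range φ, f y ∂μH[d] = ∫ x, f (φ x) ∂μH[d] := by
  rw [← hφ.map_hausdorffMeasure (.inl hd), hφ.isClosedEmbedding.measurableEmbedding.integral_map]

namespace Orientation

variable {E : Type*} [NormedAddCommGroup E] [InnerProductSpace ℝ E]
  [Fact (Module.finrank ℝ E = 2)] (o : Orientation ℝ E (Fin 2))

local notation "J" => o.rightAngleRotation
local notation "ω" => o.areaForm

lemma norm_smul_add_smul_rightAngleRotation_sq (a b : ℝ) (x : E) :
    ‖a • x + b • J x‖ ^ 2 = (a ^ 2 + b ^ 2) * ‖x‖ ^ 2 := by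
  rw [norm_add_sq_real, real_inner_smul_left, real_inner_smul_right, real_inner_comm,
    inner_rightAngleRotation_self, norm_smul, norm_smul, LinearIsometryEquiv.norm_map]
  simp only [norm_eq_abs, mul_pow, sq_abs]
  ring

noncomputable def levelLine (w : E) (s t : ℝ) : E :=
  (s / ‖w‖ ^ 2) • w + (t / ‖w‖) • J w

variable {o} {w : E} (s : ℝ)

lemma isometry_levelLine (hw : w ≠ 0) : Isometry (o.levelLine w s) := by
  refine Isometry.of_dist_eq fun a b ↦ ?_
  have hw' : 0 < ‖w‖ := norm_pos_iff.2 hw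
  rw [dist_eq_norm, levelLine, levelLine, add_sub_add_left_eq_sub, ← sub_smul, ← sub_div,
    norm_smul, LinearIsometryEquiv.norm_map, norm_div, norm_norm, div_mul_cancel₀ _ hw'.ne',
    dist_eq_norm]

lemma inner_levelLine (hw : w ≠ 0) (t : ℝ) : inner ℝ w (o.levelLine w s t) = s := by
  have hw' : ‖w‖ ≠ 0 := norm_ne_zero_iff.2 hw
  rw [levelLine, inner_add_right, real_inner_smul_right, real_inner_smul_right,
    inner_rightAngleRotation_right, areaForm_apply_self, real_inner_self_eq_norm_sq]
  field_simp
  ring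

lemma range_levelLine (hw : w ≠ 0) : range (o.levelLine w s) = {y | inner ℝ w y = s} := by
  refine Subset.antisymm (range_subset_iff.2 (inner_levelLine s hw)) fun y hy ↦ ⟨ω w y / ‖w‖, ?_⟩
  have hw' : ‖w‖ ≠ 0 := norm_ne_zero_iff.2 hw
  set b := y - o.levelLine w s (ω w y / ‖w‖)
  have hinner : inner ℝ w b = 0 := by rw [inner_sub_right, inner_levelLine s hw, hy, sub_self]
  have harea : ω w b = 0 := by
    simp only [b, levelLine, map_sub, map_add, map_smul, areaForm_apply_self,
      areaForm_rightAngleRotation_right, real_inner_self_eq_norm_sq, smul_eq_mul]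
    field_simp
    ring
  -- `b` is orthogonal to both `w` and `J w`, which span `E`
  have := o.inner_sq_add_areaForm_sq w b
  rw [hinner, harea] at this
  have hb : b = 0 := by
    simpa [hw'] using this.symm
  exact (sub_eq_zero.1 hb).symm

lemma norm_levelLine_sq (hw : w ≠ 0) (t : ℝ) :
    ‖o.levelLine w s t‖ ^ 2 = (s / ‖w‖) ^ 2 + t ^ 2 := by
  have hw' : ‖w‖ ≠ 0 := norm_ne_zero_iff.2 hw
  rw [levelLine, norm_smul_add_smul_rightAngleRotation_sq]
  field_simp

lemma norm_sub_levelLine_sq (hw : w ≠ 0) (t : ℝ) :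
    ‖w - o.levelLine w s t‖ ^ 2 = (‖w‖ - s / ‖w‖) ^ 2 + t ^ 2 := by
  have hw' : ‖w‖ ≠ 0 := norm_ne_zero_iff.2 hw
  have : w - o.levelLine w s t = (1 - s / ‖w‖ ^ 2) • w + (-(t / ‖w‖)) • J w := by
    rw [levelLine, sub_smul, one_smul, neg_smul]; abel
  rw [this, norm_smul_add_smul_rightAngleRotation_sq]
  field_simp

lemma norm_sub_levelLine_rpow_mul_norm_levelLine_rpow (hw : w ≠ 0) (α t : ℝ) :
    ‖w - o.levelLine w s t‖ ^ (-α) * ‖o.levelLine w s t‖ ^ (-α) =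
      lineKernel α (‖w‖ - s / ‖w‖) (s / ‖w‖) t := by
  rw [lineKernel, ← norm_sub_levelLine_sq s hw, ← norm_levelLine_sq s hw,
    sqrt_sq (norm_nonneg _), sqrt_sq (norm_nonneg _)]

variable (o) in
theorem setIntegral_setOf_inner_eq_integral_levelLine [MeasurableSpace E] [BorelSpace E]
    {F : Type*} [NormedAddCommGroup F] [NormedSpace ℝ F] (hw : w ≠ 0) (f : E → F) :
    ∫ y in {y | inner ℝ w y = s}, f y ∂μH[1] = ∫ t, f (o.levelLine w s t) := by
  rw [← range_levelLine s hw,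
    (isometry_levelLine s hw).setIntegral_range_hausdorffMeasure zero_le_one, hausdorffMeasure_real]

end Orientation

lemma rpow_mul_inv_mul_rpow_le_one {α r d : ℝ} (hα₁ : 1 / 2 ≤ α) (hα₂ : α ≤ 1) (hr : 0 < r)
    (hd : 0 < d) (hrd : r ≤ 2 * d) : r ^ (2 * α) * (2 * r)⁻¹ * d ^ (1 - 2 * α) ≤ 1 := by
  have hsplit : r ^ (2 * α) * (2 * r)⁻¹ * d ^ (1 - 2 * α) = (r / d) ^ (2 * α - 1) / 2 := by
    rw [div_rpow hr.le hd.le, show 1 - 2 * α = -(2 * α - 1) by ring, rpow_neg hd.le,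
      rpow_sub hr, rpow_one]
    field_simp
  calc r ^ (2 * α) * (2 * r)⁻¹ * d ^ (1 - 2 * α) = (r / d) ^ (2 * α - 1) / 2 := hsplit
    _ ≤ 2 ^ (2 * α - 1) / 2 := by
      gcongr
      · linarith
      · exact (div_le_iff₀ hd).2 (by linarith)
    _ ≤ 2 ^ (1 : ℝ) / 2 := by gcongr <;> linarith
    _ = 1 := by norm_num

/-- For `1/2 < α < 1` the two-dimensional integral `Λ_{2,α}` is uniformly
bounded on `ℝ² \ {0}`. -/
theorem Lambda_two_alpha_uniformly_bounded :
    ∀ α : ℝ, 1 / 2 < α → α < 1 → ∃ C : ℝ, 0 < C ∧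
      ∀ w : EuclideanSpace ℝ (Fin 2), w ≠ 0 →
        ‖w‖ ^ (2 * α) * (2 * ‖w‖)⁻¹ *
            ∫ y in {y : EuclideanSpace ℝ (Fin 2) |
                2 * (inner ℝ w y : ℝ) = 1 + ‖w‖ ^ 2},
              ‖w - y‖ ^ (-α) * ‖y‖ ^ (-α) ∂μH[(1 : ℝ)] ≤ C := by
  intro α hα₁ hα₂
  have hα₁' : 0 < 2 * α - 1 := by linarith
  have hα₂' : 0 < 1 - α := by linarith
  refine ⟨2 / (1 - α) + 2 / (2 * α - 1), by positivity, fun w hw ↦ ?_⟩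
  have : Fact (Module.finrank ℝ (EuclideanSpace ℝ (Fin 2)) = 2) := ⟨finrank_euclideanSpace_fin⟩
  set o := (EuclideanSpace.basisFun (Fin 2) ℝ).toBasis.orientation
  set r := ‖w‖
  set s := (1 + r ^ 2) / 2
  have hr : 0 < r := norm_pos_iff.2 hw
  have hd : 0 < s / r := by positivity
  have hrd : r ≤ 2 * (s / r) := by
    rw [show 2 * (s / r) = r + r⁻¹ by field_simp; ring]
    linarith [inv_pos.2 hr]
  have hset : {y | 2 * inner ℝ w y = 1 + r ^ 2} = {y | inner ℝ w y = s} := by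
    ext y
    simp only [mem_ofPred_eq, s]
    constructor <;> intro h <;> linarith
  rw [hset, o.setIntegral_setOf_inner_eq_integral_levelLine s hw]
  simp only [Orientation.norm_sub_levelLine_rpow_mul_norm_levelLine_rpow s hw]
  calc _ ≤ r ^ (2 * α) * (2 * r)⁻¹ *
        ((s / r) ^ (1 - 2 * α) * (2 / (1 - α) + 2 / (2 * α - 1))) := by
        gcongr
        exact integral_lineKernel_le hα₁ hα₂ hd
    _ = r ^ (2 * α) * (2 * r)⁻¹ * (s / r) ^ (1 - 2 * α) * (2 / (1 - α) + 2 / (2 * α - 1)) := by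
        ring
    _ ≤ 2 / (1 - α) + 2 / (2 * α - 1) := by
        refine mul_le_of_le_one_left (by positivity) ?_
        exact rpow_mul_inv_mul_rpow_le_one hα₁.le hα₂.le hr hd hrd
end
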